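/- Let n ≥ 2 and let W be the Weyl group of type C_n. Suppose w_1, …, w_k ∈ W are such that the positive roots Δ⁺ are the disjoint union Δ⁺ = Φ_{w_1} ⊔ Φ_{w_2} ⊔ ⋯ ⊔ Φ_{w_k} of their inversion sets. If u ∈ W satisfies w_i ≤ w_i u in the Bruhat order for every i = 1, …, k, then u = e (the identity). -/

import Mathlib

open RealInnerProductSpace

noncomputable section

variable {V : Type*} [NormedAddCommGroup V] [InnerProductSpace ℝ V] [FiniteDimensional ℝ V]

/-- Orthogonal reflection of `V` in the hyperplane orthogonal to `α`. -/
def reflRoot (α : V) : V ≃ₗᵢ[ℝ] V := Submodule.reflection (ℝ ∙ α)ᗮ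

/-- The inversion set `Φ_w = w⁻¹Δ⁻ ∩ Δ⁺ = {α ∈ Δ⁺ | w α ∈ Δ⁻}`, where `Δ⁻ = -Δ⁺`
(so `w α ∈ Δ⁻ ↔ -(w α) ∈ Δ⁺`). -/
def invSet (pos : Set V) (w : V ≃ₗᵢ[ℝ] V) : Set V := {α | α ∈ pos ∧ -(w α) ∈ pos}

/-- The length of `w`, i.e. the number of inversions of `w`. -/
def invLen (pos : Set V) (w : V ≃ₗᵢ[ℝ] V) : ℕ := (invSet pos w).ncard

/-- The Bruhat order on the Weyl group: the reflexive-transitive closure of the relation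
`x ⋖ x * s_α` (right multiplication by the reflection in a root `α`) whenever the length
(= number of inversions) increases. -/
def bruhatLE (roots pos : Set V) : (V ≃ₗᵢ[ℝ] V) → (V ≃ₗᵢ[ℝ] V) → Prop :=
  Relation.ReflTransGen
    (fun x y => (∃ α ∈ roots, y = x * reflRoot α) ∧ invLen pos x < invLen pos y)

/-- The standard basis vector `ε_p` of `ℝ^m`. -/
def eps (m : ℕ) (p : Fin m) : EuclideanSpace ℝ (Fin m) := EuclideanSpace.single p (1 : ℝ)

/-- `ρ`, one half the sum of the positive roots. -/
def rho (pos : Set V) : V := (2⁻¹ : ℝ) • ∑ᶠ α ∈ pos, α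

/-- The group of signed permutations: isometries of `ℝ^n` sending each standard basis
vector to plus or minus a standard basis vector. -/
def signedPerm (n : ℕ) : Set (EuclideanSpace ℝ (Fin n) ≃ₗᵢ[ℝ] EuclideanSpace ℝ (Fin n)) :=
  {g | ∀ p, ∃ q, g (eps n p) = eps n q ∨ g (eps n p) = -eps n q}

/-- The group of even-signed permutations: signed permutations with an even number of
sign changes. -/
def evenSignedPerm (n : ℕ) :
    Set (EuclideanSpace ℝ (Fin n) ≃ₗᵢ[ℝ] EuclideanSpace ℝ (Fin n)) :=
  {g | g ∈ signedPerm n ∧ Even (Set.ncard {p : Fin n | ∃ q, g (eps n p) = -eps n q})}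

/-- The positive roots of type `B_n`: `ε_p` and `ε_p ± ε_q` for `p < q`. -/
def posB (n : ℕ) : Set (EuclideanSpace ℝ (Fin n)) :=
  {v | (∃ p, v = eps n p) ∨
    ∃ p q : Fin n, p < q ∧ (v = eps n p + eps n q ∨ v = eps n p - eps n q)}

/-- The roots of type `B_n`. -/
def rootsB (n : ℕ) : Set (EuclideanSpace ℝ (Fin n)) := {v | v ∈ posB n ∨ -v ∈ posB n}

/-- The positive roots of type `C_n`: `2ε_p` and `ε_p ± ε_q` for `p < q`. -/
def posC (n : ℕ) : Set (EuclideanSpace ℝ (Fin n)) :=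
  {v | (∃ p, v = (2 : ℝ) • eps n p) ∨
    ∃ p q : Fin n, p < q ∧ (v = eps n p + eps n q ∨ v = eps n p - eps n q)}

/-- The roots of type `C_n`. -/
def rootsC (n : ℕ) : Set (EuclideanSpace ℝ (Fin n)) := {v | v ∈ posC n ∨ -v ∈ posC n}

/-- The positive roots of type `D_n`: `ε_p ± ε_q` for `p < q`. -/
def posD (n : ℕ) : Set (EuclideanSpace ℝ (Fin n)) :=
  {v | ∃ p q : Fin n, p < q ∧ (v = eps n p + eps n q ∨ v = eps n p - eps n q)}

/-- The roots of type `D_n`. -/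
def rootsD (n : ℕ) : Set (EuclideanSpace ℝ (Fin n)) := {v | v ∈ posD n ∨ -v ∈ posD n}

/-!
Let `v = ρ - u ρ` with `ρ = (n, …, 1)`. Since `ρ` is dominant, `v ≥ 0` in the dominance order
(nonnegative prefix sums). A Bruhat step `y ⋖ y s_β` with `y β > 0` lowers `y ρ` by a nonnegative
multiple of `y β`, so `w_i ≤ w_i u` gives `w_i v ≥ 0` for every `i`. The partition
`Δ⁺ = ⊔ Φ_{w_i}` then forces `v = 0` one coordinate at a time: for each `m` there are fundamental
weights `ω_{a_i}` with `∑ ⟪w_i v, ω_{a_i}⟫ = -v_m` once the earlier coordinates vanish. Finally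
`u ρ = ρ` with `ρ` regular gives `u = e`.
-/

open scoped Pointwise

lemma sum_boole_eq_one_of_existsUnique {ι : Type*} [Fintype ι] {P : ι → Prop} [DecidablePred P]
    (h : ∃! i, P i) : ∑ i, (if P i then (1 : ℝ) else 0) = 1 := by
  obtain ⟨i, hi, huniq⟩ := h
  rw [Finset.sum_eq_single i (fun j _ hj => if_neg (mt (huniq j) hj)) (by simp), if_pos hi]

section RootSystem

variable {E : Type*} [NormedAddCommGroup E] [InnerProductSpace ℝ E] {pos : Set E} {h : E}

lemma reflRoot_apply (α v : E) : reflRoot α v = v - (2 * ⟪α, v⟫ / ‖α‖ ^ 2) • α := by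
  rw [reflRoot, Submodule.reflection_apply, Submodule.starProjection_orthogonal_val,
    Submodule.starProjection_singleton]
  simp only [RCLike.ofReal_real_eq_id, id_eq]
  module

lemma reflRoot_neg (α : E) : reflRoot (-α) = reflRoot α := by
  unfold reflRoot
  congr 1
  rw [← Set.neg_singleton, Submodule.span_neg]

lemma reflRoot_reflRoot (α v : E) : reflRoot α (reflRoot α v) = v :=
  Submodule.reflection_reflection _ v

lemma neg_mem_union_neg {G : Type*} [InvolutiveNeg G] {s : Set G} {v : G} (hv : v ∈ s ∪ -s) :
    -v ∈ s ∪ -s := by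
  rw [Set.mem_union, Set.mem_neg, neg_neg]
  exact hv.symm

lemma mem_of_inner_pos (hh : ∀ β ∈ pos, 0 < ⟪β, h⟫) {v : E} (hv : v ∈ pos ∪ -pos)
    (hvh : 0 < ⟪v, h⟫) : v ∈ pos :=
  hv.resolve_right fun hneg => by
    linarith [hh _ (Set.mem_neg.1 hneg), inner_neg_left (𝕜 := ℝ) v h]

lemma mem_invSet_iff_inner_neg (hh : ∀ β ∈ pos, 0 < ⟪β, h⟫) {x : E ≃ₗᵢ[ℝ] E}
    (hx : Set.MapsTo x pos (pos ∪ -pos)) {β : E} (hβ : β ∈ pos) :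
    β ∈ invSet pos x ↔ ⟪x β, h⟫ < 0 := by
  refine ⟨fun hinv => by linarith [hh _ hinv.2, inner_neg_left (𝕜 := ℝ) (x β) h],
    fun hneg => ⟨hβ, ?_⟩⟩
  refine mem_of_inner_pos hh (neg_mem_union_neg (hx hβ)) ?_
  rw [inner_neg_left]
  linarith

/-- Writing `s_α β = β - c α`, the height of `-(s_α β)` forces `c > 0`, so
`-(x β) = -(x s_α β) + c (-(x α))` is a positive combination of positive roots. -/
lemma mem_invSet_of_mem_invSet_mul_reflRoot (hh : ∀ β ∈ pos, 0 < ⟪β, h⟫) {x : E ≃ₗᵢ[ℝ] E}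
    (hx : Set.MapsTo x pos (pos ∪ -pos)) {α : E} (hα : α ∈ pos)
    (hs : Set.MapsTo (reflRoot α) pos (pos ∪ -pos)) (hxα : -(x α) ∈ pos) {β : E}
    (hβ : β ∈ invSet pos (x * reflRoot α)) (hsβ : reflRoot α β ∉ pos) : β ∈ invSet pos x := by
  obtain ⟨hβpos, hxsβ⟩ := hβ
  set c := 2 * ⟪α, β⟫ / ‖α‖ ^ 2
  have hsβ_eq : reflRoot α β = β - c • α := reflRoot_apply α β
  have hsβ_neg : ⟪reflRoot α β, h⟫ < 0 := by
    have := hh _ (Set.mem_neg.1 ((hs hβpos).resolve_left hsβ))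
    rw [inner_neg_left] at this
    linarith
  have hc : 0 < c := by
    rw [hsβ_eq, inner_sub_left, real_inner_smul_left] at hsβ_neg
    nlinarith [hh _ hα, hh _ hβpos]
  have hxβ : -(x β) = -(x (reflRoot α β)) + c • -(x α) := by
    rw [hsβ_eq, map_sub, map_smul]
    module
  refine ⟨hβpos, mem_of_inner_pos hh (neg_mem_union_neg (hx hβpos)) ?_⟩
  rw [hxβ, inner_add_left, real_inner_smul_left]
  have h1 := hh _ hxsβ
  have h2 := hh _ hxα
  positivity

/-- If `x α < 0`, then `β ↦ if s_α β > 0 then s_α β else β` injects `Φ_{x s_α}` into `Φ_x`. -/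
lemma mem_of_invLen_lt_invLen_mul_reflRoot (hfin : pos.Finite) (hh : ∀ β ∈ pos, 0 < ⟪β, h⟫)
    {x : E ≃ₗᵢ[ℝ] E} (hx : Set.MapsTo x pos (pos ∪ -pos)) {α : E} (hα : α ∈ pos)
    (hs : Set.MapsTo (reflRoot α) pos (pos ∪ -pos))
    (hlt : invLen pos x < invLen pos (x * reflRoot α)) : x α ∈ pos := by
  classical
  by_contra hxα
  have hxα' : -(x α) ∈ pos := Set.mem_neg.1 ((hx hα).resolve_left hxα)
  let f : E → E := fun β => if reflRoot α β ∈ pos then reflRoot α β else β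
  have hmaps : Set.MapsTo f (invSet pos (x * reflRoot α)) (invSet pos x) := by
    intro β hβ
    by_cases hsβ : reflRoot α β ∈ pos
    · simp only [f, if_pos hsβ]
      exact ⟨hsβ, hβ.2⟩
    · simpa only [f, if_neg hsβ] using
        mem_invSet_of_mem_invSet_mul_reflRoot hh hx hα hs hxα' hβ hsβ
  have hinj : Set.InjOn f (invSet pos (x * reflRoot α)) := by
    rintro β₁ ⟨hβ₁, -⟩ β₂ ⟨hβ₂, -⟩ heq
    by_cases h₁ : reflRoot α β₁ ∈ pos <;> by_cases h₂ : reflRoot α β₂ ∈ pos <;>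
      simp only [f, h₁, h₂, if_true, if_false] at heq
    · exact (reflRoot α).injective heq
    · exact absurd (by rwa [← heq, reflRoot_reflRoot]) h₂
    · exact absurd (by rwa [heq, reflRoot_reflRoot]) h₁
    · exact heq
  have := Set.ncard_le_ncard_of_injOn f hmaps hinj (hfin.subset fun _ hβ => hβ.1)
  exact absurd hlt (not_lt.2 this)

/-- Each Bruhat step `y ↦ y s_β`, where `y β > 0`, subtracts `(2⟪β, h⟫ / ‖β‖²) y β` from `y h`. -/
lemma sub_mem_hull_of_bruhatLE {roots : Set E} (hroots : roots ⊆ pos ∪ -pos) (hfin : pos.Finite)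
    (hh : ∀ β ∈ pos, 0 < ⟪β, h⟫) {W : Set (E ≃ₗᵢ[ℝ] E)} (hW₁ : 1 ∈ W)
    (hWmul : ∀ w ∈ W, ∀ α ∈ roots, w * reflRoot α ∈ W)
    (hWpos : ∀ w ∈ W, Set.MapsTo w pos (pos ∪ -pos)) {x y : E ≃ₗᵢ[ℝ] E} (hx : x ∈ W)
    (hxy : bruhatLE roots pos x y) : y ∈ W ∧ x h - y h ∈ PointedCone.hull ℝ pos := by
  induction hxy with
  | refl => exact ⟨hx, by simp⟩
  | @tail y z _ hyz ih =>
    obtain ⟨⟨α, hα, rfl⟩, hlt⟩ := hyz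
    obtain ⟨hy, hcone⟩ := ih
    obtain ⟨β, hβ, hαβ⟩ : ∃ β ∈ pos, reflRoot α = reflRoot β := by
      rcases hroots hα with hα | hα
      · exact ⟨α, hα, rfl⟩
      · exact ⟨-α, Set.mem_neg.1 hα, (reflRoot_neg α).symm⟩
    refine ⟨hWmul y hy α hα, ?_⟩
    have hs : Set.MapsTo (reflRoot β) pos (pos ∪ -pos) :=
      hWpos _ (by simpa [hαβ] using hWmul 1 hW₁ α hα)
    rw [hαβ] at hlt ⊢
    have hyβ : y β ∈ pos := mem_of_invLen_lt_invLen_mul_reflRoot hfin hh (hWpos y hy) hβ hs hlt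
    have hc : 0 ≤ 2 * ⟪β, h⟫ / ‖β‖ ^ 2 := by have := hh β hβ; positivity
    have hstep : x h - (y * reflRoot β) h = (x h - y h) + (2 * ⟪β, h⟫ / ‖β‖ ^ 2) • y β := by
      rw [LinearIsometryEquiv.coe_mul, Function.comp_apply, reflRoot_apply, map_sub, map_smul]
      abel
    rw [hstep]
    exact add_mem hcone (PointedCone.smul_mem _ hc (PointedCone.subset_hull hyβ))

end RootSystem

section TypeC

variable {n : ℕ}

local notation "ℝⁿ" => EuclideanSpace ℝ (Fin n)

lemma eps_apply (p r : Fin n) : eps n p r = if r = p then 1 else 0 := by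
  simp [eps]

lemma inner_eps_left (p : Fin n) (v : ℝⁿ) : ⟪eps n p, v⟫ = v p := by
  simp [eps, EuclideanSpace.inner_single_left]

lemma sum_smul_eps (x : ℝⁿ) : ∑ p, x p • eps n p = x := by
  simpa [eps, EuclideanSpace.basisFun_apply] using (EuclideanSpace.basisFun (Fin n) ℝ).sum_repr x

/-- For type `C_n` this is `ρ = (n, n - 1, …, 1)`. -/
def rhoC (n : ℕ) : EuclideanSpace ℝ (Fin n) := WithLp.toLp 2 fun r => (n : ℝ) - (r : ℕ)

lemma rhoC_apply (r : Fin n) : rhoC n r = n - (r : ℕ) := rfl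

lemma rhoC_apply_pos (r : Fin n) : 0 < rhoC n r := by
  rw [rhoC_apply, sub_pos, Nat.cast_lt]
  exact r.isLt

lemma inner_rhoC_pos {β : ℝⁿ} (hβ : β ∈ posC n) : 0 < ⟪β, rhoC n⟫ := by
  rcases hβ with ⟨p, rfl⟩ | ⟨p, q, hpq, rfl | rfl⟩
  · rw [real_inner_smul_left, inner_eps_left]
    linarith [rhoC_apply_pos p]
  · rw [inner_add_left, inner_eps_left, inner_eps_left]
    linarith [rhoC_apply_pos p, rhoC_apply_pos q]
  · rw [inner_sub_left, inner_eps_left, inner_eps_left, rhoC_apply, rhoC_apply, sub_pos]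
    have : (p : ℝ) < q := by exact_mod_cast hpq
    linarith

lemma posC_finite : (posC n).Finite := by
  refine (Set.finite_range fun t : Fin n × Fin n × Bool =>
    if t.2.2 then eps n t.1 + eps n t.2.1 else eps n t.1 - eps n t.2.1).subset ?_
  rintro x (⟨p, rfl⟩ | ⟨p, q, _, rfl | rfl⟩)
  · exact ⟨(p, p, true), by simp [two_smul]⟩
  · exact ⟨(p, q, true), by simp⟩
  · exact ⟨(p, q, false), by simp⟩

lemma two_smul_eps_mem_posC (p : Fin n) : (2 : ℝ) • eps n p ∈ posC n := Or.inl ⟨p, rfl⟩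

lemma eps_sub_eps_mem_posC {p q : Fin n} (hpq : p < q) : eps n p - eps n q ∈ posC n :=
  Or.inr ⟨p, q, hpq, Or.inr rfl⟩

lemma eps_add_eps_mem_posC {p q : Fin n} (hpq : p < q) : eps n p + eps n q ∈ posC n :=
  Or.inr ⟨p, q, hpq, Or.inl rfl⟩

lemma smul_eps_add_smul_eps_mem_rootsC {r r' : Fin n} (hne : r ≠ r') {a b : ℝ}
    (ha : a = 1 ∨ a = -1) (hb : b = 1 ∨ b = -1) : a • eps n r + b • eps n r' ∈ rootsC n := by
  wlog hlt : r < r' generalizing r r' a b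
  · rw [add_comm]
    exact this hne.symm hb ha (lt_of_le_of_ne (not_lt.1 hlt) hne.symm)
  have hsub := eps_sub_eps_mem_posC hlt
  have hadd := eps_add_eps_mem_posC hlt
  rcases ha with rfl | rfl <;> rcases hb with rfl | rfl
  · exact Or.inl (by simpa using hadd)
  · exact Or.inl (by simpa [← sub_eq_add_neg] using hsub)
  · exact Or.inr (by simpa [neg_add_eq_sub] using hsub)
  · exact Or.inr (by simpa [add_comm] using hadd)

lemma smul_two_smul_eps_mem_rootsC (r : Fin n) {a : ℝ} (ha : a = 1 ∨ a = -1) :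
    a • (2 : ℝ) • eps n r ∈ rootsC n := by
  rcases ha with rfl | rfl
  · exact Or.inl (by simpa using two_smul_eps_mem_posC r)
  · exact Or.inr (by simpa using two_smul_eps_mem_posC r)

/-- Pairing with the fundamental weight `ω_j = ε_0 + ⋯ + ε_{j-1}` of `C_n`. -/
def prefixSum (j : ℕ) : ℝⁿ →L[ℝ] ℝ := ∑ r : Fin n with r.val < j, EuclideanSpace.proj r

lemma prefixSum_apply (j : ℕ) (x : ℝⁿ) : prefixSum j x = ∑ r : Fin n with r.val < j, x r := by
  simp [prefixSum]

lemma prefixSum_eps (j : ℕ) (p : Fin n) : prefixSum j (eps n p) = if (p : ℕ) < j then 1 else 0 := by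
  simp [prefixSum_apply, eps_apply, Finset.sum_ite_eq']

lemma prefixSum_nonneg_of_mem_posC {β : ℝⁿ} (hβ : β ∈ posC n) (j : ℕ) : 0 ≤ prefixSum j β := by
  rcases hβ with ⟨p, rfl⟩ | ⟨p, q, hpq, rfl | rfl⟩
  · rw [map_smul, prefixSum_eps]
    split_ifs <;> norm_num
  · rw [map_add, prefixSum_eps, prefixSum_eps]
    split_ifs <;> norm_num
  · rw [map_sub, prefixSum_eps, prefixSum_eps]
    have : (p : ℕ) < q := hpq
    split_ifs <;> (try omega) <;> norm_num

lemma prefixSum_nonneg_of_mem_hull {x : ℝⁿ} (hx : x ∈ PointedCone.hull ℝ (posC n)) (j : ℕ) :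
    0 ≤ prefixSum j x := by
  induction hx using Submodule.span_induction with
  | mem β hβ => exact prefixSum_nonneg_of_mem_posC hβ j
  | zero => simp
  | add x y _ _ hx hy => rw [map_add]; positivity
  | smul c x _ hx =>
    rw [Nonneg.mk_smul, map_smul, smul_eq_mul]
    exact mul_nonneg c.2 hx

lemma prefixSum_map_eq_sum (g : ℝⁿ ≃ₗᵢ[ℝ] ℝⁿ) (j : ℕ) (x : ℝⁿ) :
    prefixSum j (g x) = ∑ p, x p * prefixSum j (g (eps n p)) := by
  conv_lhs => rw [← sum_smul_eps x]
  simp [map_sum, map_smul]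

lemma one_mem_signedPerm : (1 : ℝⁿ ≃ₗᵢ[ℝ] ℝⁿ) ∈ signedPerm n :=
  fun p => ⟨p, Or.inl rfl⟩

lemma mul_mem_signedPerm {g g' : ℝⁿ ≃ₗᵢ[ℝ] ℝⁿ} (hg : g ∈ signedPerm n) (hg' : g' ∈ signedPerm n) :
    g * g' ∈ signedPerm n := by
  intro p
  obtain ⟨q, hq⟩ := hg' p
  obtain ⟨r, hr⟩ := hg q
  refine ⟨r, ?_⟩
  rw [LinearIsometryEquiv.coe_mul, Function.comp_apply]
  rcases hq with hq | hq <;> rcases hr with hr | hr <;> simp [hq, hr]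

lemma reflRoot_two_smul_eps_apply (p r : Fin n) :
    reflRoot ((2 : ℝ) • eps n p) (eps n r) = if r = p then -eps n p else eps n r := by
  have hnorm : ‖(2 : ℝ) • eps n p‖ ^ 2 = 4 := by
    rw [← real_inner_self_eq_norm_sq, real_inner_smul_left, real_inner_smul_right,
      inner_eps_left, eps_apply, if_pos rfl]
    norm_num
  rw [reflRoot_apply, hnorm, real_inner_smul_left, inner_eps_left, eps_apply]
  by_cases h : r = p
  · subst h
    simp only [if_true]
    module
  · simp [h, Ne.symm h]

lemma reflRoot_eps_add_smul_eps_apply {p q : Fin n} (hpq : p ≠ q) {b : ℝ} (hb : b = 1 ∨ b = -1)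
    (r : Fin n) : reflRoot (eps n p + b • eps n q) (eps n r) =
      if r = p then -b • eps n q else if r = q then -b • eps n p else eps n r := by
  have hinner (s : Fin n) : ⟪eps n p + b • eps n q, eps n s⟫ =
      (if s = p then 1 else 0) + b * (if s = q then 1 else 0) := by
    rw [inner_add_left, real_inner_smul_left, inner_eps_left, inner_eps_left, eps_apply,
      eps_apply]
    simp only [eq_comm]
  have hb2 : b * b = 1 := by rcases hb with rfl | rfl <;> norm_num
  have hnorm : ‖eps n p + b • eps n q‖ ^ 2 = 2 := by
    rw [← real_inner_self_eq_norm_sq, inner_add_right, real_inner_smul_right, hinner, hinner,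
      if_pos rfl, if_pos rfl, if_neg hpq, if_neg hpq.symm]
    linarith
  rw [reflRoot_apply, hinner, hnorm]
  by_cases h₁ : r = p
  · subst h₁
    simp only [if_true, if_neg hpq]
    module
  by_cases h₂ : r = q
  · subst h₂
    simp only [if_true, if_neg h₁]
    rw [show (2 * (0 + b * 1) / 2) • (eps n p + b • eps n r) = b • eps n p + (b * b) • eps n r by
      module, hb2]
    module
  · simp [h₁, h₂]

lemma reflRoot_mem_signedPerm {α : ℝⁿ} (hα : α ∈ rootsC n) : reflRoot α ∈ signedPerm n := by
  wlog hpos : α ∈ posC n generalizing α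
  · rw [← reflRoot_neg]
    exact this (neg_mem_union_neg hα) (hα.resolve_left hpos)
  intro r
  rcases hpos with ⟨p, rfl⟩ | ⟨p, q, hpq, rfl | rfl⟩
  · rw [reflRoot_two_smul_eps_apply]
    split_ifs
    · exact ⟨p, Or.inr rfl⟩
    · exact ⟨r, Or.inl rfl⟩
  · rw [← one_smul ℝ (eps n q), reflRoot_eps_add_smul_eps_apply hpq.ne (Or.inl rfl)]
    split_ifs
    · exact ⟨q, Or.inr (by simp)⟩
    · exact ⟨p, Or.inr (by simp)⟩
    · exact ⟨r, Or.inl rfl⟩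
  · rw [sub_eq_add_neg, ← neg_one_smul ℝ (eps n q),
      reflRoot_eps_add_smul_eps_apply hpq.ne (Or.inr rfl)]
    split_ifs
    · exact ⟨q, Or.inl (by simp)⟩
    · exact ⟨p, Or.inl (by simp)⟩
    · exact ⟨r, Or.inl rfl⟩

structure IsSignedPerm (g : ℝⁿ ≃ₗᵢ[ℝ] ℝⁿ) (π : Fin n → Fin n) (ε : Fin n → ℝ) : Prop where
  sign : ∀ p, ε p = 1 ∨ ε p = -1
  apply_eps : ∀ p, g (eps n p) = ε p • eps n (π p)

lemma exists_isSignedPerm {g : ℝⁿ ≃ₗᵢ[ℝ] ℝⁿ} (hg : g ∈ signedPerm n) :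
    ∃ π ε, IsSignedPerm g π ε := by
  classical
  choose π hπ using hg
  refine ⟨π, fun p => if g (eps n p) = eps n (π p) then 1 else -1, ⟨fun p => ?_, fun p => ?_⟩⟩
  · split_ifs <;> simp
  · split_ifs with h
    · rw [h, one_smul]
    · rw [(hπ p).resolve_left h, neg_one_smul]

namespace IsSignedPerm

variable {g : EuclideanSpace ℝ (Fin n) ≃ₗᵢ[ℝ] EuclideanSpace ℝ (Fin n)} {π : Fin n → Fin n}
  {ε : Fin n → ℝ}

lemma sign_mul_self (hg : IsSignedPerm g π ε) (p : Fin n) : ε p * ε p = 1 := by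
  rcases hg.sign p with h | h <;> rw [h] <;> norm_num

lemma apply_apply (hg : IsSignedPerm g π ε) (x : ℝⁿ) (p : Fin n) : g x (π p) = ε p * x p := by
  have he : eps n (π p) = ε p • g (eps n p) := by
    rw [hg.apply_eps, smul_smul, hg.sign_mul_self, one_smul]
  rw [← inner_eps_left, he, real_inner_smul_left, LinearIsometryEquiv.inner_map_map,
    inner_eps_left]

lemma injective (hg : IsSignedPerm g π ε) : Function.Injective π := by
  intro p p' hpp'
  have h := g.inner_map_map (eps n p) (eps n p')
  rw [hg.apply_eps, hg.apply_eps, hpp', real_inner_smul_left, real_inner_smul_right,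
    inner_eps_left, inner_eps_left, eps_apply, eps_apply, if_pos rfl, mul_one] at h
  by_contra hne
  rw [if_neg hne] at h
  rcases hg.sign p with h₁ | h₁ <;> rcases hg.sign p' with h₂ | h₂ <;> rw [h₁, h₂] at h <;>
    norm_num at h

lemma mapsTo_posC (hg : IsSignedPerm g π ε) : Set.MapsTo g (posC n) (rootsC n) := by
  have hne {p q : Fin n} (hpq : p < q) : π p ≠ π q := hg.injective.ne hpq.ne
  rintro β (⟨p, rfl⟩ | ⟨p, q, hpq, rfl | rfl⟩)
  · rw [map_smul, hg.apply_eps, smul_comm]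
    exact smul_two_smul_eps_mem_rootsC _ (hg.sign p)
  · rw [map_add, hg.apply_eps, hg.apply_eps]
    exact smul_eps_add_smul_eps_mem_rootsC (hne hpq) (hg.sign p) (hg.sign q)
  · rw [map_sub, hg.apply_eps, hg.apply_eps, sub_eq_add_neg, ← neg_smul]
    exact smul_eps_add_smul_eps_mem_rootsC (hne hpq) (hg.sign p) ((hg.sign q).symm.imp
      (fun h => by rw [h, neg_neg]) (fun h => by rw [h]))

lemma mem_invSet_iff (hg : IsSignedPerm g π ε) {β : ℝⁿ} (hβ : β ∈ posC n) :
    β ∈ invSet (posC n) g ↔ ⟪g β, rhoC n⟫ < 0 :=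
  mem_invSet_iff_inner_neg (fun _ => inner_rhoC_pos) hg.mapsTo_posC hβ

lemma inner_apply_eps_rhoC (hg : IsSignedPerm g π ε) (p : Fin n) :
    ⟪g (eps n p), rhoC n⟫ = ε p * rhoC n (π p) := by
  rw [hg.apply_eps, real_inner_smul_left, inner_eps_left]

/-- `prefixSum j (g ρ)` sums at most `j` entries `±(n - p)`, while `prefixSum j ρ` sums the `j`
largest ones (rearrangement inequality). -/
lemma prefixSum_apply_rhoC_le (hg : IsSignedPerm g π ε) (j : ℕ) :
    prefixSum j (g (rhoC n)) ≤ prefixSum j (rhoC n) := by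
  let σ : Equiv.Perm (Fin n) := Equiv.ofBijective π hg.injective.bijective_of_finite
  let f : Fin n → ℝ := fun r => if (r : ℕ) < j then 1 else 0
  have hmono : Monovary f (rhoC n) := by
    intro p q hpq
    rw [rhoC_apply, rhoC_apply, sub_lt_sub_iff_left, Nat.cast_lt] at hpq
    simp only [f]
    split_ifs <;> first | omega | norm_num
  calc prefixSum j (g (rhoC n)) = ∑ p, rhoC n p * (ε p * f (σ p)) := by
        simp [prefixSum_map_eq_sum, hg.apply_eps, prefixSum_eps, f, σ]
    _ ≤ ∑ p, f (σ p) • rhoC n p := by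
        refine Finset.sum_le_sum fun p _ => ?_
        have := rhoC_apply_pos p
        rcases hg.sign p with h | h <;> simp only [f, h, smul_eq_mul] <;> split_ifs <;> linarith
    _ ≤ ∑ p, f p • rhoC n p := hmono.sum_comp_perm_smul_le_sum_smul
    _ = prefixSum j (rhoC n) := by
        rw [prefixSum_apply, Finset.sum_filter]
        exact Finset.sum_congr rfl fun p _ => by simp only [f, smul_eq_mul]; split_ifs <;> simp

lemma eq_one_of_apply_rhoC (hg : IsSignedPerm g π ε) (h : g (rhoC n) = rhoC n) : g = 1 := by
  have hfix (p : Fin n) : π p = p ∧ ε p = 1 := by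
    have hp : rhoC n (π p) = ε p * rhoC n p := by rw [← hg.apply_apply, h]
    have := rhoC_apply_pos (π p)
    have := rhoC_apply_pos p
    have hε : ε p = 1 := (hg.sign p).resolve_right fun h => by rw [h] at hp; linarith
    rw [hε, one_mul, rhoC_apply, rhoC_apply, sub_right_inj, Nat.cast_inj] at hp
    exact ⟨Fin.ext hp, hε⟩
  ext x : 1
  rw [← sum_smul_eps x, map_sum]
  simp [hg.apply_eps, hfix]

open scoped Classical in
lemma prefixSum_apply_eps_of_le (hg : IsSignedPerm g π ε) {m q : Fin n} (hmq : m ≤ q) :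
    prefixSum ((π m : ℕ) + if ε m = -1 then 1 else 0) (g (eps n q)) =
      if q = m then -(if (2 : ℝ) • eps n m ∈ invSet (posC n) g then 1 else 0)
      else (if eps n m - eps n q ∈ invSet (posC n) g then 1 else 0) -
        (if eps n m + eps n q ∈ invSet (posC n) g then 1 else 0) := by
  by_cases hqm : q = m
  · subst hqm
    rw [if_pos rfl, hg.mem_invSet_iff (two_smul_eps_mem_posC q), map_smul, real_inner_smul_left,
      hg.inner_apply_eps_rhoC, hg.apply_eps, map_smul, prefixSum_eps, smul_eq_mul]
    have := rhoC_apply_pos (π q)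
    rcases hg.sign q with h | h <;> simp only [h] <;> split_ifs <;> first | omega | linarith
  · have hlt : m < q := lt_of_le_of_ne hmq (Ne.symm hqm)
    have hπ : (π q : ℕ) ≠ π m := Fin.val_ne_of_ne (hg.injective.ne hqm)
    rw [if_neg hqm, hg.mem_invSet_iff (eps_sub_eps_mem_posC hlt),
      hg.mem_invSet_iff (eps_add_eps_mem_posC hlt), map_sub, map_add, inner_sub_left,
      inner_add_left, hg.inner_apply_eps_rhoC, hg.inner_apply_eps_rhoC, rhoC_apply, rhoC_apply,
      hg.apply_eps, map_smul, prefixSum_eps, smul_eq_mul]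
    have hm : ((π m : ℕ) : ℝ) < n := Nat.cast_lt.2 (π m).isLt
    have hq : ((π q : ℕ) : ℝ) < n := Nat.cast_lt.2 (π q).isLt
    rcases lt_or_gt_of_ne hπ with h | h <;> have h' := (Nat.cast_lt (α := ℝ)).2 h <;>
      rcases hg.sign m with hεm | hεm <;> rcases hg.sign q with hεq | hεq <;>
      simp only [hεm, hεq] <;> split_ifs <;> first | omega | linarith

end IsSignedPerm

lemma mapsTo_posC_of_mem_signedPerm {g : ℝⁿ ≃ₗᵢ[ℝ] ℝⁿ} (hg : g ∈ signedPerm n) :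
    Set.MapsTo g (posC n) (posC n ∪ -posC n) :=
  let ⟨_, _, hg'⟩ := exists_isSignedPerm hg
  hg'.mapsTo_posC

section Partition

variable {k : ℕ} {w : Fin k → EuclideanSpace ℝ (Fin n) ≃ₗᵢ[ℝ] EuclideanSpace ℝ (Fin n)}

lemma sum_prefixSum_apply_eps_of_le {π : Fin k → Fin n → Fin n} {ε : Fin k → Fin n → ℝ}
    (hw : ∀ i, IsSignedPerm (w i) (π i) (ε i))
    (hpart : ∀ β ∈ posC n, ∃! i, β ∈ invSet (posC n) (w i)) {m q : Fin n} (hmq : m ≤ q) :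
    ∑ i, prefixSum ((π i m : ℕ) + if ε i m = -1 then 1 else 0) (w i (eps n q)) =
      if q = m then -1 else 0 := by
  classical
  simp_rw [(hw _).prefixSum_apply_eps_of_le hmq]
  split_ifs with hqm
  · rw [Finset.sum_neg_distrib,
      sum_boole_eq_one_of_existsUnique (hpart _ (two_smul_eps_mem_posC m))]
  · have hlt : m < q := lt_of_le_of_ne hmq (Ne.symm hqm)
    rw [Finset.sum_sub_distrib,
      sum_boole_eq_one_of_existsUnique (hpart _ (eps_sub_eps_mem_posC hlt)),
      sum_boole_eq_one_of_existsUnique (hpart _ (eps_add_eps_mem_posC hlt)), sub_self]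

/-- Induction on the coordinates: once `v_q = 0` for `q < m`, `prefixSum (m + 1) v = v_m ≥ 0`,
while by the partition of `Δ⁺` the nonnegative numbers `prefixSum (π_i m + [ε_i m = -1]) (w_i v)`
add up to `-v_m`. -/
lemma eq_zero_of_prefixSum_nonneg (hw : ∀ i, w i ∈ signedPerm n)
    (hpart : ∀ β ∈ posC n, ∃! i, β ∈ invSet (posC n) (w i)) {v : EuclideanSpace ℝ (Fin n)}
    (hv : ∀ j, 0 ≤ prefixSum j v) (hwv : ∀ i j, 0 ≤ prefixSum j (w i v)) : v = 0 := by
  choose π ε hπε using fun i => exists_isSignedPerm (hw i)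
  have hstep (m : Fin n) (hlow : ∀ q < m, v q = 0) : v m = 0 := by
    have hvm : prefixSum (m + 1) v = v m := by
      rw [prefixSum_apply]
      refine Finset.sum_eq_single_of_mem m (by simp) fun q hq hqm => hlow q ?_
      simp only [Finset.mem_filter, Finset.mem_univ, true_and] at hq
      exact lt_of_le_of_ne (Fin.le_def.2 (by omega)) hqm
    have hsum : ∑ i, prefixSum ((π i m : ℕ) + if ε i m = -1 then 1 else 0) (w i v) = -v m := by
      simp_rw [prefixSum_map_eq_sum (w _) _ v]
      rw [Finset.sum_comm]
      simp_rw [← Finset.mul_sum]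
      rw [Finset.sum_eq_single m, sum_prefixSum_apply_eps_of_le hπε hpart le_rfl, if_pos rfl,
        mul_neg_one]
      · intro q _ hqm
        rcases lt_or_gt_of_ne hqm with h | h
        · rw [hlow q h, zero_mul]
        · rw [sum_prefixSum_apply_eps_of_le hπε hpart h.le, if_neg hqm, mul_zero]
      · simp
    have := Finset.sum_nonneg fun i (_ : i ∈ Finset.univ) => hwv i ((π i m : ℕ) +
      if ε i m = -1 then 1 else 0)
    linarith [hv (m + 1)]
  ext m
  induction m using WellFoundedLT.induction with
  | _ m ih => exact hstep m ih

end Partition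

end TypeC

theorem statement2_general (n : ℕ) (k : ℕ)
    (w : Fin k → (EuclideanSpace ℝ (Fin n) ≃ₗᵢ[ℝ] EuclideanSpace ℝ (Fin n)))
    (hw : ∀ i, w i ∈ signedPerm n)
    (hcover : posC n = ⋃ i, invSet (posC n) (w i))
    (hdisj : ∀ i j, i ≠ j → Disjoint (invSet (posC n) (w i)) (invSet (posC n) (w j)))
    (u : EuclideanSpace ℝ (Fin n) ≃ₗᵢ[ℝ] EuclideanSpace ℝ (Fin n))
    (hu : u ∈ signedPerm n)
    (hle : ∀ i, bruhatLE (rootsC n) (posC n) (w i) (w i * u)) :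
    u = 1 := by
  obtain ⟨τ, t, hu'⟩ := exists_isSignedPerm hu
  have hpart (β) (hβ : β ∈ posC n) : ∃! i, β ∈ invSet (posC n) (w i) := by
    obtain ⟨i, hi⟩ := Set.mem_iUnion.1 (hcover ▸ hβ)
    exact ⟨i, hi, fun j hj => by_contra fun hji => Set.disjoint_left.1 (hdisj j i hji) hj hi⟩
  have hdom (i) : w i (rhoC n) - (w i * u) (rhoC n) ∈ PointedCone.hull ℝ (posC n) :=
    (sub_mem_hull_of_bruhatLE subset_rfl posC_finite (fun _ => inner_rhoC_pos)
      one_mem_signedPerm (fun _ hg _ hα => mul_mem_signedPerm hg (reflRoot_mem_signedPerm hα))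
      (fun _ => mapsTo_posC_of_mem_signedPerm) (hw i) (hle i)).2
  refine hu'.eq_one_of_apply_rhoC (sub_eq_zero.1 ?_).symm
  refine eq_zero_of_prefixSum_nonneg hw hpart (fun j => ?_) (fun i j => ?_)
  · rw [map_sub, sub_nonneg]
    exact hu'.prefixSum_apply_rhoC_le j
  · rw [map_sub]
    exact prefixSum_nonneg_of_mem_hull (hdom i) j

/-- In type `C_n` (`n ≥ 2`), if `Δ⁺ = Φ_{w_1} ⊔ ⋯ ⊔ Φ_{w_k}` and `u ∈ W`
satisfies `w_i ≤ w_i u` in the Bruhat order for all `i`, then `u = e`. -/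
theorem statement2 (n : ℕ) (hn : 2 ≤ n) (k : ℕ)
    (w : Fin k → (EuclideanSpace ℝ (Fin n) ≃ₗᵢ[ℝ] EuclideanSpace ℝ (Fin n)))
    (hw : ∀ i, w i ∈ signedPerm n)
    (hcover : posC n = ⋃ i, invSet (posC n) (w i))
    (hdisj : ∀ i j, i ≠ j → Disjoint (invSet (posC n) (w i)) (invSet (posC n) (w j)))
    (u : EuclideanSpace ℝ (Fin n) ≃ₗᵢ[ℝ] EuclideanSpace ℝ (Fin n))
    (hu : u ∈ signedPerm n)
    (hle : ∀ i, bruhatLE (rootsC n) (posC n) (w i) (w i * u)) :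
    u = 1 :=
  statement2_general n k w hw hcover hdisj u hu hle
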